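/- arXiv:2002.04909 — 5 statements merged into one kernel-verified Lean document; each statement's English description precedes it below -/
import Mathlib

section
/- On ℓ²(ℤ^d), the commutator of the discrete Laplacian Δ with i times the generator of dilations A equals ∑_{k=1}^d Δ_k(4 − Δ_k), where Δ_k := 2 − S_k − S_k*. -/
/-! Discrete Schrödinger operator objects on sequences over `ℤ^d`.
All operators below are finite-difference/multiplication operators, well defined
pointwise on arbitrary sequences `(Fin d → ℤ) → ℂ`. -/

/-- Right shift in the `i`-th coordinate: `(S_i ψ)(n) = ψ(n₁, ..., n_i - 1, ..., n_d)`. -/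
noncomputable def shiftR {d : ℕ} (i : Fin d) (ψ : (Fin d → ℤ) → ℂ) : (Fin d → ℤ) → ℂ :=
  fun n => ψ (Function.update n i (n i - 1))

/-- Left shift (adjoint of the right shift): `(S_i* ψ)(n) = ψ(n₁, ..., n_i + 1, ..., n_d)`. -/
noncomputable def shiftL {d : ℕ} (i : Fin d) (ψ : (Fin d → ℤ) → ℂ) : (Fin d → ℤ) → ℂ :=
  fun n => ψ (Function.update n i (n i + 1))

/-- The one-coordinate discrete Laplacian `Δ_i = 2 - S_i - S_i*`. -/
noncomputable def lapC {d : ℕ} (i : Fin d) (ψ : (Fin d → ℤ) → ℂ) : (Fin d → ℤ) → ℂ :=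
  fun n => 2 * ψ n - shiftR i ψ n - shiftL i ψ n

/-- The discrete Laplacian `Δ = ∑ Δ_i`. -/
noncomputable def lap {d : ℕ} (ψ : (Fin d → ℤ) → ℂ) : (Fin d → ℤ) → ℂ :=
  fun n => ∑ i : Fin d, lapC i ψ n

/-- The position operator in the `i`-th coordinate: `(N_i ψ)(n) = n_i ψ(n)`. -/
noncomputable def posOp {d : ℕ} (i : Fin d) (ψ : (Fin d → ℤ) → ℂ) : (Fin d → ℤ) → ℂ :=
  fun n => (n i : ℂ) * ψ n

/-- The generator of dilations
`A₀ = (i/2) ∑_{i=1}^d (S_i - S_i*) N_i + N_i (S_i - S_i*)`. -/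
noncomputable def dilA {d : ℕ} (ψ : (Fin d → ℤ) → ℂ) : (Fin d → ℤ) → ℂ :=
  fun n => (Complex.I / 2) *
    ∑ i : Fin d,
      (shiftR i (posOp i ψ) n - shiftL i (posOp i ψ) n
        + posOp i (shiftR i ψ) n - posOp i (shiftL i ψ) n)

/-- Auxiliary: the `i`-th summand of the dilation generator (without the `I/2` factor). -/
noncomputable def gop {d : ℕ} (i : Fin d) (ψ : (Fin d → ℤ) → ℂ) : (Fin d → ℤ) → ℂ :=
  fun n => shiftR i (posOp i ψ) n - shiftL i (posOp i ψ) n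
        + posOp i (shiftR i ψ) n - posOp i (shiftL i ψ) n

lemma dilA_eq {d : ℕ} (ψ : (Fin d → ℤ) → ℂ) (m : Fin d → ℤ) :
    dilA ψ m = (Complex.I / 2) * ∑ i : Fin d, gop i ψ m := rfl

lemma key {d : ℕ} (k i : Fin d) (ψ : (Fin d → ℤ) → ℂ) (n : Fin d → ℤ) :
    Complex.I * ((Complex.I / 2) * (lapC k (gop i ψ) n - gop i (lapC k ψ) n))
      = if i = k then lapC k (fun m => 4 * ψ m - lapC k ψ m) n else 0 := by
  rcases eq_or_ne i k with h | h
  · subst h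
    simp only [lapC, gop, shiftR, shiftL, posOp, Function.update_self,
      Function.update_idem, sub_add_cancel, add_sub_cancel_right,
      Function.update_eq_self, if_pos rfl]
    push_cast
    ring_nf
    rw [Complex.I_sq]
    ring_nf
  · simp only [lapC, gop, shiftR, shiftL, posOp, if_neg h, Function.update_self,
      Function.update_of_ne h, Function.update_of_ne (Ne.symm h),
      Function.update_comm h]
    ring

lemma lapC_dilA {d : ℕ} (k : Fin d) (ψ : (Fin d → ℤ) → ℂ) (n : Fin d → ℤ) :
    lapC k (dilA ψ) n = (Complex.I / 2) * ∑ i : Fin d, lapC k (gop i ψ) n := by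
  simp only [lapC, shiftR, shiftL, dilA_eq, Finset.mul_sum, ← Finset.sum_sub_distrib]
  exact Finset.sum_congr rfl fun i _ => by ring

lemma gop_sum {d : ℕ} (i : Fin d) (f : Fin d → (Fin d → ℤ) → ℂ) (n : Fin d → ℤ) :
    gop i (fun m => ∑ k : Fin d, f k m) n = ∑ k : Fin d, gop i (f k) n := by
  simp only [gop, shiftR, shiftL, posOp, Finset.mul_sum, Finset.sum_sub_distrib,
    Finset.sum_add_distrib]

/-- The commutator `[Δ, iA] = i(ΔA - AΔ)` equals `∑_{k=1}^d Δ_k (4 - Δ_k)`. -/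
theorem stmt2 (d : ℕ) (ψ : (Fin d → ℤ) → ℂ) (n : Fin d → ℤ) :
    Complex.I * (lap (dilA ψ) n - dilA (lap ψ) n)
      = ∑ k : Fin d, lapC k (fun m => 4 * ψ m - lapC k ψ m) n := by
  have h1 : lap (dilA ψ) n
      = (Complex.I / 2) * ∑ k : Fin d, ∑ i : Fin d, lapC k (gop i ψ) n := by
    simp only [lap, lapC_dilA, Finset.mul_sum]
  have h2 : dilA (lap ψ) n
      = (Complex.I / 2) * ∑ k : Fin d, ∑ i : Fin d, gop i (lapC k ψ) n := by
    rw [dilA_eq, Finset.sum_comm]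
    congr 1
    exact Finset.sum_congr rfl fun i _ => gop_sum i (fun k => lapC k ψ) n
  have h3 : ∀ k : Fin d,
      ∑ i : Fin d, Complex.I * ((Complex.I / 2) * (lapC k (gop i ψ) n - gop i (lapC k ψ) n))
        = lapC k (fun m => 4 * ψ m - lapC k ψ m) n := by
    intro k
    simp [key]
  calc Complex.I * (lap (dilA ψ) n - dilA (lap ψ) n)
      = ∑ k : Fin d, ∑ i : Fin d,
          Complex.I * ((Complex.I / 2) * (lapC k (gop i ψ) n - gop i (lapC k ψ) n)) := by
        rw [h1, h2, ← mul_sub, ← Finset.sum_sub_distrib]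
        simp only [← Finset.sum_sub_distrib, Finset.mul_sum]
    _ = ∑ k : Fin d, lapC k (fun m => 4 * ψ m - lapC k ψ m) n :=
        Finset.sum_congr rfl fun k _ => h3 k
end

section
/- For every integer n ≥ 1, lim_{x→+∞} Φ_n(x)/log^n(x) = 1/n!, where Φ_n(z) := −Li_n(−z) and Li_n is the polylogarithm of order n. -/
/-- `Φ_n(x) := -Li_n(-x)` for real `x ≥ 0`, defined via `Φ_0(x) = x/(1+x)` (from
`Li_0(z) = z/(1-z)`) and the standard recursion `Li_{σ+1}(z) = ∫_0^z Li_σ(t)/t dt`,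
which realizes the analytic continuation of the power series along the positive reals. -/
noncomputable def Phi : ℕ → ℝ → ℝ
  | 0, x => x / (1 + x)
  | (n + 1), x => ∫ t in (0 : ℝ)..x, Phi n t / t

/-! On `[0, ∞)` every `Φ_n` is 1-Lipschitz with `Φ_n(0) = 0`, since `f ↦ ∫₀ˣ f(t)/t dt` preserves
this property; so all the defining integrals converge and `|Φ_n(1)| ≤ 1`. Writing
`Φ_{n+1}(x) = Φ_{n+1}(1) + ∫₁ˣ Φ_n(t)/t dt` and `log^{n+1} x/(n+1)! = ∫₁ˣ log^n t/(n! t) dt`,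
the error `Φ_{n+1}(x) - log^{n+1} x/(n+1)!` gains at most a factor `log x` per step, starting
from `Φ_1(x) - log x = log(1 + 1/x) ∈ [0, 1]`. Hence it is `O((1 + log x)^n) = o(log^{n+1} x)`. -/

open Real MeasureTheory intervalIntegral Set Filter
open scoped NNReal Nat

section IntegralDiv

variable {f : ℝ → ℝ} {C : ℝ≥0}

lemma norm_div_le_of_lipschitzOnWith (hf : LipschitzOnWith C f (Ici 0)) (h0 : f 0 = 0)
    {t : ℝ} (ht : 0 ≤ t) : ‖f t / t‖ ≤ C := by
  rcases ht.eq_or_lt with rfl | ht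
  · simp
  rw [norm_div, Real.norm_of_nonneg ht.le, div_le_iff₀ ht]
  simpa [h0, Real.dist_eq, abs_of_pos ht] using hf.dist_le_mul t ht.le 0 self_mem_Ici

lemma intervalIntegrable_div_of_lipschitzOnWith (hf : LipschitzOnWith C f (Ici 0))
    (h0 : f 0 = 0) {a b : ℝ} (ha : 0 ≤ a) (hb : 0 ≤ b) :
    IntervalIntegrable (fun t => f t / t) volume a b := by
  have hcont : ContinuousOn (fun t => f t / t) (Ioi 0) :=
    (hf.continuousOn.mono Ioi_subset_Ici_self).div continuousOn_id fun t ht => ht.ne'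
  have from_zero : ∀ c, 0 ≤ c → IntervalIntegrable (fun t => f t / t) volume 0 c := by
    intro c hc
    rw [intervalIntegrable_iff_integrableOn_Ioc_of_le hc]
    refine .of_bound measure_Ioc_lt_top
      ((hcont.mono Ioc_subset_Ioi_self).aestronglyMeasurable measurableSet_Ioc) C ?_
    exact (ae_restrict_iff' measurableSet_Ioc).2 <| .of_forall fun t ht =>
      norm_div_le_of_lipschitzOnWith hf h0 ht.1.le
  exact (from_zero a ha).symm.trans (from_zero b hb)

lemma lipschitzOnWith_integral_div (hf : LipschitzOnWith C f (Ici 0)) (h0 : f 0 = 0) :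
    LipschitzOnWith C (fun x => ∫ t in 0..x, f t / t) (Ici 0) := by
  refine LipschitzOnWith.of_dist_le_mul fun x (hx : 0 ≤ x) y (hy : 0 ≤ y) => ?_
  rw [dist_eq_norm, integral_interval_sub_left
    (intervalIntegrable_div_of_lipschitzOnWith hf h0 le_rfl hx)
    (intervalIntegrable_div_of_lipschitzOnWith hf h0 le_rfl hy), Real.dist_eq]
  exact norm_integral_le_of_norm_le_const fun t ht =>
    norm_div_le_of_lipschitzOnWith hf h0 ((le_inf hy hx).trans ht.1.le)

end IntegralDiv

lemma integral_log_pow_div {x : ℝ} (hx : 0 < x) (k : ℕ) :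
    ∫ t in 1..x, log t ^ k / t = log x ^ (k + 1) / (k + 1) := by
  have hpos : ∀ t ∈ uIcc 1 x, 0 < t := fun t ht => (lt_inf_iff.2 ⟨one_pos, hx⟩).trans_le ht.1
  have := integral_comp_mul_deriv (g := fun u => u ^ k)
    (fun t ht => hasDerivAt_log (hpos t ht).ne')
    (continuousOn_inv₀.mono fun t ht => (hpos t ht).ne') (continuous_pow k)
  simpa [div_eq_mul_inv, integral_pow] using this

@[simp]
lemma Phi_apply_zero (n : ℕ) : Phi n 0 = 0 := by
  cases n <;> simp [Phi]

lemma lipschitzOnWith_Phi_zero : LipschitzOnWith 1 (Phi 0) (Ici 0) := by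
  refine LipschitzOnWith.of_dist_le_mul fun x (hx : 0 ≤ x) y (hy : 0 ≤ y) => ?_
  have hdiff : Phi 0 x - Phi 0 y = (x - y) / ((1 + x) * (1 + y)) := by
    simp only [Phi]
    field_simp
    ring
  rw [Real.dist_eq, Real.dist_eq, hdiff, abs_div, NNReal.coe_one, one_mul]
  refine div_le_self (abs_nonneg _) ?_
  rw [abs_of_pos (by positivity)]
  nlinarith

lemma lipschitzOnWith_Phi : ∀ n, LipschitzOnWith 1 (Phi n) (Ici 0)
  | 0 => lipschitzOnWith_Phi_zero
  | n + 1 => lipschitzOnWith_integral_div (lipschitzOnWith_Phi n) (Phi_apply_zero n)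

lemma intervalIntegrable_Phi_div (n : ℕ) {a b : ℝ} (ha : 0 ≤ a) (hb : 0 ≤ b) :
    IntervalIntegrable (fun t => Phi n t / t) volume a b :=
  intervalIntegrable_div_of_lipschitzOnWith (lipschitzOnWith_Phi n) (Phi_apply_zero n) ha hb

lemma abs_Phi_le (n : ℕ) {x : ℝ} (hx : 0 ≤ x) : |Phi n x| ≤ x := by
  simpa [Real.dist_eq, abs_of_nonneg hx] using
    (lipschitzOnWith_Phi n).dist_le_mul x hx 0 self_mem_Ici

lemma Phi_one {x : ℝ} (hx : 0 ≤ x) : Phi 1 x = log (1 + x) := by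
  have h : (∫ t in 0..x, Phi 0 t / t) = ∫ t in 0..x, (1 + t)⁻¹ := by
    refine integral_congr_ae (.of_forall fun t ht => ?_)
    rw [uIoc_of_le hx] at ht
    simp only [Phi]
    field_simp [ht.1.ne']
  show (∫ t in 0..x, Phi 0 t / t) = _
  rw [h, integral_comp_add_left (fun t => t⁻¹), integral_inv_of_pos (by norm_num) (by linarith)]
  simp

lemma Phi_succ_sub_log_pow_eq (n : ℕ) {x : ℝ} (hx : 0 < x) :
    Phi (n + 1) x - log x ^ (n + 1) / (n + 1)! =
      Phi (n + 1) 1 + ∫ t in 1..x, (Phi n t - log t ^ n / n !) / t := by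
  have hPhi : Phi (n + 1) x - Phi (n + 1) 1 = ∫ t in 1..x, Phi n t / t :=
    integral_interval_sub_left (intervalIntegrable_Phi_div n le_rfl hx.le)
      (intervalIntegrable_Phi_div n le_rfl zero_le_one)
  have hlog : ∫ t in 1..x, log t ^ n / n ! / t = log x ^ (n + 1) / (n + 1)! := by
    simp_rw [div_right_comm _ (n ! : ℝ)]
    rw [intervalIntegral.integral_div, integral_log_pow_div hx, Nat.factorial_succ]
    push_cast
    field_simp
  have hint : IntervalIntegrable (fun t => log t ^ n / n ! / t) volume 1 x := by
    refine ContinuousOn.intervalIntegrable ?_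
    have hpos : ∀ t ∈ uIcc 1 x, t ≠ 0 := fun t ht =>
      ((lt_inf_iff.2 ⟨one_pos, hx⟩).trans_le ht.1).ne'
    fun_prop (disch := assumption)
  simp_rw [sub_div]
  rw [integral_sub (intervalIntegrable_Phi_div n zero_le_one hx.le) hint, ← hPhi, hlog]
  ring

lemma abs_Phi_succ_sub_log_pow_le (n : ℕ) {x : ℝ} (hx : 1 ≤ x) :
    |Phi (n + 1) x - log x ^ (n + 1) / (n + 1)!| ≤ (log x + 1) ^ n := by
  have hx0 : 0 < x := one_pos.trans_le hx
  induction n generalizing x with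
  | zero =>
    have hlower : log x ≤ log (1 + x) := log_le_log hx0 (by linarith)
    have hupper : log (1 + x) - log x ≤ x⁻¹ := by
      rw [← log_div (by positivity) hx0.ne']
      calc log ((1 + x) / x) ≤ (1 + x) / x - 1 := log_le_sub_one_of_pos (by positivity)
        _ = x⁻¹ := by field_simp; ring
    simp only [zero_add, pow_one, Nat.factorial_one, Nat.cast_one, div_one, pow_zero,
      Phi_one hx0.le]
    rw [abs_le]
    constructor <;> linarith [inv_le_one_of_one_le₀ hx]
  | succ n ih =>
    have herr : ‖∫ t in 1..x, (Phi (n + 1) t - log t ^ (n + 1) / (n + 1)!) / t‖ ≤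
        ∫ t in 1..x, (log x + 1) ^ n * t⁻¹ := by
      refine norm_integral_le_of_norm_le hx (.of_forall fun t ht => ?_)
        ((intervalIntegrable_inv_iff.2 (.inr (notMem_uIcc_of_lt one_pos hx0))).const_mul _)
      have ht0 : 0 < t := one_pos.trans ht.1
      rw [norm_div, Real.norm_of_nonneg ht0.le, div_eq_mul_inv]
      refine mul_le_mul_of_nonneg_right ((ih ht.1.le ht0).trans ?_) (inv_nonneg.2 ht0.le)
      gcongr
      · linarith [log_nonneg ht.1.le]
      · exact ht.2
    have hPhi1 : |Phi (n + 2) 1| ≤ 1 := abs_Phi_le (n + 2) zero_le_one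
    rw [intervalIntegral.integral_const_mul, integral_inv_of_pos one_pos hx0, div_one] at herr
    rw [Phi_succ_sub_log_pow_eq (n + 1) hx0]
    calc _ ≤ |Phi (n + 2) 1| + ‖∫ t in 1..x, (Phi (n + 1) t - log t ^ (n + 1) / (n + 1)!) / t‖ :=
          abs_add_le _ _
      _ ≤ 1 + (log x + 1) ^ n * log x := add_le_add hPhi1 herr
      _ ≤ (log x + 1) ^ (n + 1) := by
        rw [pow_succ]
        nlinarith [one_le_pow₀ (n := n) (by linarith [log_nonneg hx] : 1 ≤ log x + 1)]

lemma abs_Phi_div_log_pow_sub_le (n : ℕ) {x : ℝ} (hx : 1 ≤ x) (hL : 1 ≤ log x) :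
    |Phi (n + 1) x / log x ^ (n + 1) - 1 / (n + 1)!| ≤ 2 ^ n / log x := by
  have hLpos : 0 < log x ^ (n + 1) := by positivity
  calc |Phi (n + 1) x / log x ^ (n + 1) - 1 / (n + 1)!|
      = |Phi (n + 1) x - log x ^ (n + 1) / (n + 1)!| / log x ^ (n + 1) := by
        rw [← abs_of_pos hLpos, ← abs_div, abs_of_pos hLpos]
        congr 1
        field_simp
    _ ≤ (2 * log x) ^ n / log x ^ (n + 1) := by
        gcongr
        refine (abs_Phi_succ_sub_log_pow_le n hx).trans ?_
        gcongr
        linarith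
    _ = 2 ^ n / log x := by
        field_simp
        ring

/-- For every integer `n ≥ 1`, `lim_{x → +∞} Φ_n(x) / log^n(x) = 1/n!`. -/
theorem stmt5 (n : ℕ) (hn : 1 ≤ n) :
    Filter.Tendsto (fun x : ℝ => Phi n x / (Real.log x) ^ n)
      Filter.atTop (nhds (1 / (n.factorial : ℝ))) := by
  obtain ⟨m, rfl⟩ := Nat.exists_eq_add_of_le' hn
  rw [← tendsto_sub_nhds_zero_iff]
  refine squeeze_zero_norm' ?_
    ((tendsto_const_nhds (x := (2 : ℝ) ^ m)).div_atTop tendsto_log_atTop)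
  filter_upwards [eventually_ge_atTop 1, tendsto_log_atTop.eventually_ge_atTop 1] with x hx hL
  exact abs_Phi_div_log_pow_sub_le m hx hL
end

section
/- The function f(z) = log(z) (principal branch, cut along (−∞,0]) admits the Nevanlinna integral representation log(z) = ∫_{−∞}^0 (1/(λ−z) − λ/(λ²+1)) dλ for z ∈ ℂ \ (−∞,0]. -/
/-!
A primitive of the integrand is `G λ = log (z - λ) - log (1 + λ²) / 2`: for `λ ≤ 0` the point
`z - λ` stays in the slit plane, so `G` is differentiable there with no branch-cut issue, and
`G 0 = log z`. As `λ → -∞`, `log (z - λ) - log |λ| → 0` and `log |λ| - log (1 + λ²) / 2 → 0`,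
so `G → 0`. The integrand equals `(z + (1 + z²) / (λ - z)) / (1 + λ²)`, hence is `O(λ⁻²)`,
and the improper fundamental theorem of calculus gives the result.
-/

open MeasureTheory Filter Topology Complex

namespace Complex

lemma sub_ofReal_mem_slitPlane {z : ℂ} (hz : z ∈ slitPlane) {t : ℝ} (ht : t ≤ 0) :
    z - t ∈ slitPlane := by
  rw [mem_slitPlane_iff] at hz ⊢
  simp only [sub_re, ofReal_re, sub_im, ofReal_im, sub_zero]
  exact hz.imp (fun h => by linarith) id

lemma exists_pos_forall_nonpos_le_norm_ofReal_sub {z : ℂ} (hz : z ∈ slitPlane) :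
    ∃ c > 0, ∀ t : ℝ, t ≤ 0 → c ≤ ‖(t : ℂ) - z‖ := by
  obtain ⟨c, hc, hball⟩ := Metric.isOpen_iff.1 isOpen_slitPlane z hz
  refine ⟨c, hc, fun t ht => not_lt.1 fun h => ?_⟩
  exact (ofReal_mem_slitPlane.1 (hball (by rwa [Metric.mem_ball, dist_eq]))).not_ge ht

lemma hasDerivAt_log_sub_ofReal_sub_half_log_one_add_sq {z : ℂ} {t : ℝ}
    (h : z - t ∈ slitPlane) :
    HasDerivAt (fun s : ℝ => log (z - s) - (Real.log (1 + s ^ 2) / 2 : ℝ))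
      (1 / ((t : ℂ) - z) - t / ((t : ℂ) ^ 2 + 1)) t := by
  have hlog : HasDerivAt (fun s : ℝ => log (z - s)) (-1 / (z - t)) t :=
    ((hasDerivAt_id t).ofReal_comp.const_sub z).clog_real h
  have hreal : HasDerivAt (fun s : ℝ => Real.log (1 + s ^ 2) / 2) (t / (1 + t ^ 2)) t := by
    refine (((hasDerivAt_pow 2 t).const_add 1).log (by positivity)).div_const 2 |>.congr_deriv ?_
    ring
  refine (hlog.sub hreal.ofReal_comp).congr_deriv ?_
  have h1 : z - t ≠ 0 := slitPlane_ne_zero h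
  have h2 : (1 : ℂ) + t ^ 2 ≠ 0 := by exact_mod_cast (by positivity : (1 + t ^ 2 : ℝ) ≠ 0)
  rw [← neg_sub z, add_comm _ (1 : ℂ)]
  push_cast
  field_simp

lemma one_div_ofReal_sub_sub_div_sq_add_one_eq (z : ℂ) {t : ℝ} (h : (t : ℂ) - z ≠ 0) :
    1 / ((t : ℂ) - z) - t / ((t : ℂ) ^ 2 + 1)
      = (z + (1 + z ^ 2) / ((t : ℂ) - z)) * ((1 + t ^ 2)⁻¹ : ℝ) := by
  have h2 : (1 : ℂ) + t ^ 2 ≠ 0 := by exact_mod_cast (by positivity : (1 + t ^ 2 : ℝ) ≠ 0)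
  rw [add_comm _ (1 : ℂ)]
  push_cast
  field_simp
  ring

lemma integrableOn_one_div_ofReal_sub_sub_div_sq_add_one {z : ℂ} (hz : z ∈ slitPlane) :
    IntegrableOn (fun t : ℝ => 1 / ((t : ℂ) - z) - t / ((t : ℂ) ^ 2 + 1)) (Set.Iic 0) := by
  obtain ⟨c, hc, hle⟩ := exists_pos_forall_nonpos_le_norm_ofReal_sub hz
  have hne : ∀ t : ℝ, t ≤ 0 → (t : ℂ) - z ≠ 0 := fun t ht =>
    norm_pos_iff.1 (hc.trans_le (hle t ht))
  have hcont : ContinuousOn (fun t : ℝ => 1 / ((t : ℂ) - z) - t / ((t : ℂ) ^ 2 + 1))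
      (Set.Iic 0) := by
    refine (continuousOn_const.div (by fun_prop) hne).sub
      (ContinuousOn.div (by fun_prop) (by fun_prop) fun t _ => ?_)
    exact_mod_cast (by positivity : (t ^ 2 + 1 : ℝ) ≠ 0)
  refine ((integrable_inv_one_add_sq.const_mul (‖z‖ + ‖1 + z ^ 2‖ / c)).integrableOn).mono'
    (hcont.aestronglyMeasurable measurableSet_Iic) ?_
  refine (ae_restrict_iff' measurableSet_Iic).2 (ae_of_all _ fun t ht => ?_)
  rw [one_div_ofReal_sub_sub_div_sq_add_one_eq z (hne t ht), norm_mul, norm_real,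
    Real.norm_of_nonneg (by positivity)]
  gcongr
  calc ‖z + (1 + z ^ 2) / ((t : ℂ) - z)‖ ≤ ‖z‖ + ‖1 + z ^ 2‖ / ‖(t : ℂ) - z‖ :=
        (norm_add_le _ _).trans_eq (by rw [norm_div])
    _ ≤ ‖z‖ + ‖1 + z ^ 2‖ / c := by gcongr; exact hle t ht

lemma tendsto_log_add_ofReal_sub_log_atTop (z : ℂ) :
    Tendsto (fun t : ℝ => log (z + t) - Real.log t) atTop (𝓝 0) := by
  have hlim : Tendsto (fun t : ℝ => 1 + z * (t : ℂ)⁻¹) atTop (𝓝 1) := by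
    simpa using tendsto_const_nhds.add
      (((continuous_ofReal.tendsto 0).comp (tendsto_inv_atTop_zero (𝕜 := ℝ))).const_mul z)
  have hlog := (continuousAt_clog one_mem_slitPlane).tendsto.comp hlim
  rw [log_one] at hlog
  refine hlog.congr' ?_
  filter_upwards [eventually_gt_atTop 0,
    hlim.eventually (isOpen_slitPlane.mem_nhds one_mem_slitPlane)] with t ht hmem
  have : z + t = (t : ℂ) * (1 + z * (t : ℂ)⁻¹) := by
    field_simp [ofReal_ne_zero.2 ht.ne']
    ring
  simp [this, log_ofReal_mul ht (slitPlane_ne_zero hmem)]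

lemma tendsto_log_sub_half_log_one_add_sq_atTop :
    Tendsto (fun t : ℝ => Real.log t - Real.log (1 + t ^ 2) / 2) atTop (𝓝 0) := by
  have hlim : Tendsto (fun t : ℝ => 1 + t⁻¹ ^ 2) atTop (𝓝 1) := by
    simpa using tendsto_const_nhds.add ((tendsto_inv_atTop_zero (𝕜 := ℝ)).pow 2)
  have hlog := (hlim.log one_ne_zero).div_const (-2)
  rw [Real.log_one, zero_div] at hlog
  refine hlog.congr' ?_
  filter_upwards [eventually_gt_atTop 0] with t ht
  have : 1 + t ^ 2 = t ^ 2 * (1 + t⁻¹ ^ 2) := by field_simp; ring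
  rw [this, Real.log_mul (by positivity) (by positivity), Real.log_pow]
  ring

lemma tendsto_log_sub_ofReal_sub_half_log_one_add_sq_atBot (z : ℂ) :
    Tendsto (fun s : ℝ => log (z - s) - (Real.log (1 + s ^ 2) / 2 : ℝ)) atBot (𝓝 0) := by
  have h := ((tendsto_log_add_ofReal_sub_log_atTop z).add
    ((continuous_ofReal.tendsto 0).comp tendsto_log_sub_half_log_one_add_sq_atTop)).comp
    tendsto_neg_atBot_atTop
  rw [ofReal_zero, add_zero] at h
  refine h.congr fun s => ?_
  simp only [Function.comp_apply, ofReal_neg, neg_sq, ofReal_sub, ← sub_eq_add_neg]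
  ring

end Complex

/-- Nevanlinna integral representation of the principal branch of the logarithm:
`log(z) = ∫_{-∞}^0 (1/(λ-z) - λ/(λ²+1)) dλ` for `z ∈ ℂ \ (-∞, 0]`. -/
theorem stmt8 (z : ℂ) (hz : ¬(z.im = 0 ∧ z.re ≤ 0)) :
    Complex.log z
      = ∫ lam in Set.Iic (0 : ℝ),
          (1 / ((lam : ℂ) - z) - (lam : ℂ) / ((lam : ℂ) ^ 2 + 1)) := by
  have hz' : z ∈ slitPlane := mem_slitPlane_iff.2 (by contrapose! hz; exact ⟨hz.2, hz.1⟩)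
  rw [integral_Iic_of_hasDerivAt_of_tendsto'
    (fun t ht =>
      hasDerivAt_log_sub_ofReal_sub_half_log_one_add_sq (sub_ofReal_mem_slitPlane hz' ht))
    (integrableOn_one_div_ofReal_sub_sub_div_sq_add_one hz')
    (tendsto_log_sub_ofReal_sub_half_log_one_add_sq_atBot z)]
  simp
end

section
/- For all (λ, x) in (−∞,0] × [1,∞) ∪ [0,a] × [a + sqrt(a²+1), ∞) with a > 0, one has |(1 + λx)/(x(λ − x))| ≤ 1. -/
/-- For all `(λ, x)` in `(-∞,0] × [1,∞) ∪ [0,a] × [a + √(a²+1), ∞)` with `a > 0`, one has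
`|(1 + λx)/(x(λ - x))| ≤ 1`. -/
theorem stmt12 (a : ℝ) (ha : 0 < a) (l x : ℝ)
    (h : (l ≤ 0 ∧ 1 ≤ x) ∨ (0 ≤ l ∧ l ≤ a ∧ a + Real.sqrt (a ^ 2 + 1) ≤ x)) :
    |(1 + l * x) / (x * (l - x))| ≤ 1 := by
  have hs0 : Real.sqrt (a ^ 2 + 1) ≥ 0 := Real.sqrt_nonneg _
  have hs : Real.sqrt (a ^ 2 + 1) ^ 2 = a ^ 2 + 1 := Real.sq_sqrt (by positivity)
  have hx : (0 : ℝ) < x := by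
    rcases h with ⟨_, hx1⟩ | ⟨_, _, hxa⟩
    · linarith
    · nlinarith
  have hlx : l < x := by
    rcases h with ⟨hl, hx1⟩ | ⟨_, hla, hxa⟩
    · linarith
    · nlinarith
  have habs : |x * (l - x)| = x * (x - l) := by
    rw [abs_mul, abs_of_pos hx, abs_of_neg (by linarith : l - x < 0)]; ring
  have key : |1 + l * x| ≤ |x * (l - x)| := by
    rw [habs, abs_le]
    rcases h with ⟨hl, hx1⟩ | ⟨hl0, hla, hxa⟩
    · constructor <;> nlinarith
    · constructor <;> nlinarith
  rw [abs_div]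
  exact (div_le_one (by rw [habs]; nlinarith)).mpr key
end

section
/- Let c > 0, 0 < s < 1, p ∈ ℝ. The function g_s(x,y,t) := (log^{2p}(1+⟨t⟩)/log^{2p}(1+⟨x⟩)) · (⟨t⟩^{2s}/⟨x⟩^{2s}) · y²/((t−x)² + y²) is uniformly bounded on the region {(x,y,t) : |y| ≤ c⟨x⟩} × ℝ minus the set {y = 0, x = t}. -/
/-!
Write `r = ⟨t⟩ / ⟨x⟩`. Since `log (1 + ⟨t⟩) ≤ log (1 + ⟨x⟩) + |log r|` and `log (1 + ⟨x⟩) ≥ log 2`,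
the logarithmic factor is at most `(1 + |log r| / log 2) ^ |2p|`. The last factor
`F = y² / ((t - x)² + y²)` is at most `1`, and as `⟨t⟩² ≤ 2⟨x⟩² + 2(t - x)²` and
`F (t - x)² ≤ y² ≤ c²⟨x⟩²`, also `F r² ≤ 2 (1 + c²)`. So the whole expression is bounded by a
multiple of `(1 + |log r| / log 2) ^ |2p| * r ^ (2s) / (1 + r²)`, which is bounded on `r > 0`
because `0 < 2s < 2` and powers beat logarithms both at `0` and at `∞`.
-/

open Real

lemma one_add_log_div_rpow_le_mul_rpow {b q ε : ℝ} (hb : 0 < b) (hq : 0 ≤ q) (hε : 0 < ε) :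
    ∃ K, 0 ≤ K ∧ ∀ u : ℝ, 1 ≤ u → (1 + log u / b) ^ q ≤ K * u ^ ε := by
  set δ := ε / (q + 1)
  have hδ : 0 < δ := by positivity
  refine ⟨(1 + 1 / (δ * b)) ^ q, by positivity, fun u hu => ?_⟩
  have hu0 : 0 < u := by linarith
  have hlog : log u / b ≤ 1 / (δ * b) * u ^ δ := by
    calc log u / b ≤ u ^ δ / δ / b := by gcongr; exact log_le_rpow_div hu0.le hδ
      _ = 1 / (δ * b) * u ^ δ := by field_simp
  have hbase : 1 + log u / b ≤ (1 + 1 / (δ * b)) * u ^ δ := by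
    nlinarith [one_le_rpow hu hδ.le]
  have hδq : δ * q ≤ ε := by
    rw [div_mul_eq_mul_div, div_le_iff₀ (by positivity)]; nlinarith
  calc (1 + log u / b) ^ q ≤ ((1 + 1 / (δ * b)) * u ^ δ) ^ q := by
        gcongr; have := log_nonneg hu; positivity
    _ = (1 + 1 / (δ * b)) ^ q * u ^ (δ * q) := by
        rw [mul_rpow (by positivity) (by positivity), rpow_mul hu0.le]
    _ ≤ (1 + 1 / (δ * b)) ^ q * u ^ ε := by gcongr

lemma one_add_abs_log_div_rpow_mul_rpow_div_one_add_sq_le {a b q : ℝ} (ha0 : 0 < a) (ha2 : a < 2)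
    (hb : 0 < b) (hq : 0 ≤ q) :
    ∃ K, 0 ≤ K ∧ ∀ r : ℝ, 0 < r → (1 + |log r| / b) ^ q * r ^ a / (1 + r ^ 2) ≤ K := by
  obtain ⟨K₀, hK₀0, hK₀⟩ := one_add_log_div_rpow_le_mul_rpow hb hq ha0
  obtain ⟨K₂, hK₂0, hK₂⟩ := one_add_log_div_rpow_le_mul_rpow hb hq (sub_pos.2 ha2)
  refine ⟨max K₀ K₂, le_max_of_le_left hK₀0, fun r hr => ?_⟩
  rw [div_le_iff₀ (by positivity)]
  rcases le_total r 1 with hr1 | hr1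
  · -- for `r ≤ 1` apply the log bound to `r⁻¹ ≥ 1`, against the decay of `r ^ a`
    have hlog : |log r| = log r⁻¹ := by rw [log_inv, abs_of_nonpos (log_nonpos hr.le hr1)]
    have hbound := hK₀ r⁻¹ (one_le_inv₀ hr |>.2 hr1)
    rw [← hlog, inv_rpow hr.le, ← div_eq_mul_inv, le_div_iff₀ (by positivity)] at hbound
    calc (1 + |log r| / b) ^ q * r ^ a ≤ max K₀ K₂ := hbound.trans (le_max_left _ _)
      _ ≤ max K₀ K₂ * (1 + r ^ 2) :=
        le_mul_of_one_le_right (le_max_of_le_left hK₀0) (by nlinarith)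
  · rw [abs_of_nonneg (log_nonneg hr1)]
    calc (1 + log r / b) ^ q * r ^ a ≤ K₂ * r ^ (2 - a) * r ^ a := by
          gcongr; exact hK₂ r hr1
      _ = K₂ * r ^ 2 := by rw [mul_assoc, ← rpow_add hr, sub_add_cancel, rpow_two]
      _ ≤ max K₀ K₂ * (1 + r ^ 2) :=
        mul_le_mul (le_max_right _ _) (by linarith) (by positivity) (le_max_of_le_left hK₀0)

lemma log_one_add_le_add_abs_log_div {A B : ℝ} (hA : 0 < A) (hB : 0 < B) :
    log (1 + B) ≤ log (1 + A) + |log (B / A)| := by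
  rcases le_total B A with hBA | hAB
  · have := log_le_log (by positivity) (by linarith : 1 + B ≤ 1 + A)
    linarith [abs_nonneg (log (B / A))]
  · have hle : 1 + B ≤ (1 + A) * (B / A) := by
      rw [mul_div_assoc', le_div_iff₀ hA]; nlinarith
    calc log (1 + B) ≤ log ((1 + A) * (B / A)) := log_le_log (by positivity) hle
      _ = log (1 + A) + log (B / A) := log_mul (by positivity) (by positivity)
      _ ≤ log (1 + A) + |log (B / A)| := by gcongr; exact le_abs_self _

lemma log_one_add_div_log_one_add_le {A B : ℝ} (hA : 1 ≤ A) (hB : 0 < B) :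
    log (1 + B) / log (1 + A) ≤ 1 + |log (B / A)| / log 2 := by
  have hlog2 : log 2 ≤ log (1 + A) := log_le_log (by norm_num) (by linarith)
  have hlog2_pos : 0 < log 2 := log_pos (by norm_num)
  rw [div_le_iff₀ (by linarith)]
  calc log (1 + B) ≤ log (1 + A) + |log (B / A)| := log_one_add_le_add_abs_log_div (by linarith) hB
    _ ≤ log (1 + A) + |log (B / A)| / log 2 * log (1 + A) := by
        gcongr; rw [div_mul_eq_mul_div, le_div_iff₀ hlog2_pos]; gcongr
    _ = (1 + |log (B / A)| / log 2) * log (1 + A) := by ring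

lemma rpow_le_rpow_abs_of_inv_le_of_le {R Q : ℝ} (hR : 0 < R) (hQR : Q⁻¹ ≤ R) (hRQ : R ≤ Q)
    (e : ℝ) : R ^ e ≤ Q ^ |e| := by
  rcases le_total 0 e with he | he
  · rw [abs_of_nonneg he]; exact rpow_le_rpow hR.le hRQ he
  · rw [abs_of_nonpos he, ← inv_inv R, inv_rpow (by positivity), ← rpow_neg (by positivity)]
    exact rpow_le_rpow (by positivity) ((inv_le_comm₀ hR (hR.trans_le hRQ)).2 hQR) (by linarith)

lemma log_one_add_rpow_div_le {A B : ℝ} (hA : 1 ≤ A) (hB : 1 ≤ B) (e : ℝ) :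
    log (1 + B) ^ e / log (1 + A) ^ e ≤ (1 + |log (B / A)| / log 2) ^ |e| := by
  have hLA : 0 < log (1 + A) := log_pos (by linarith)
  have hLB : 0 < log (1 + B) := log_pos (by linarith)
  rw [← div_rpow hLB.le hLA.le]
  refine rpow_le_rpow_abs_of_inv_le_of_le (by positivity) ?_
    (log_one_add_div_log_one_add_le hA (by linarith)) e
  rw [inv_le_comm₀ (by positivity) (by positivity), inv_div, ← abs_neg, ← log_inv, inv_div]
  exact log_one_add_div_log_one_add_le hB (by linarith)

lemma sq_div_add_sq_mul_one_add_div_sq_le {A B d y c : ℝ} (hA : 0 < A) (hy : |y| ≤ c * A)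
    (hB : B ^ 2 ≤ 2 * A ^ 2 + 2 * d ^ 2) :
    y ^ 2 / (d ^ 2 + y ^ 2) * (1 + (B / A) ^ 2) ≤ 3 * (1 + c ^ 2) := by
  set F := y ^ 2 / (d ^ 2 + y ^ 2)
  have hF0 : 0 ≤ F := by positivity
  have hF1 : F ≤ 1 := div_le_one_of_le₀ (by nlinarith) (by positivity)
  have hFd : F * d ^ 2 ≤ y ^ 2 := by
    rw [div_mul_eq_mul_div, mul_div_assoc]
    exact mul_le_of_le_one_right (sq_nonneg y) (div_le_one_of_le₀ (by nlinarith) (by positivity))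
  have hy2 : y ^ 2 ≤ c ^ 2 * A ^ 2 := by
    rw [← sq_abs, ← mul_pow]; exact pow_le_pow_left₀ (abs_nonneg y) hy 2
  have hFB : F * B ^ 2 / A ^ 2 ≤ 2 * (1 + c ^ 2) := by
    rw [div_le_iff₀ (by positivity)]
    nlinarith
  rw [div_pow, mul_add, mul_one, mul_div_assoc']
  linarith [sq_nonneg c]

theorem stmt14_general (c : ℝ) (s p : ℝ) (hs0 : 0 < s) (hs1 : s < 1) :
    ∃ C : ℝ, ∀ x y t : ℝ, |y| ≤ c * Real.sqrt (1 + x ^ 2) → ¬(y = 0 ∧ x = t) →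
      (Real.log (1 + Real.sqrt (1 + t ^ 2)) ^ (2 * p)
          / Real.log (1 + Real.sqrt (1 + x ^ 2)) ^ (2 * p))
        * (Real.sqrt (1 + t ^ 2) ^ (2 * s) / Real.sqrt (1 + x ^ 2) ^ (2 * s))
        * (y ^ 2 / ((t - x) ^ 2 + y ^ 2)) ≤ C := by
  obtain ⟨K, hK0, hK⟩ := one_add_abs_log_div_rpow_mul_rpow_div_one_add_sq_le
    (by linarith : 0 < 2 * s) (by linarith) (log_pos one_lt_two) (abs_nonneg (2 * p))
  refine ⟨K * (3 * (1 + c ^ 2)), fun x y t hy _ => ?_⟩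
  set A := √(1 + x ^ 2)
  set B := √(1 + t ^ 2)
  have hA : 1 ≤ A := one_le_sqrt.2 (by nlinarith)
  have hB : 1 ≤ B := one_le_sqrt.2 (by nlinarith)
  have hB2 : B ^ 2 ≤ 2 * A ^ 2 + 2 * (t - x) ^ 2 := by
    rw [sq_sqrt (by positivity), sq_sqrt (by positivity)]; nlinarith [sq_nonneg (t - 2 * x)]
  have hr : 0 < B / A := by positivity
  calc log (1 + B) ^ (2 * p) / log (1 + A) ^ (2 * p) * (B ^ (2 * s) / A ^ (2 * s))
        * (y ^ 2 / ((t - x) ^ 2 + y ^ 2))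
      ≤ (1 + |log (B / A)| / log 2) ^ |2 * p| * (B / A) ^ (2 * s)
        * (y ^ 2 / ((t - x) ^ 2 + y ^ 2)) := by
        rw [← div_rpow (by linarith : 0 ≤ B) (by linarith : 0 ≤ A)]
        gcongr
        exact log_one_add_rpow_div_le hA hB _
    _ = (1 + |log (B / A)| / log 2) ^ |2 * p| * (B / A) ^ (2 * s) / (1 + (B / A) ^ 2)
        * (y ^ 2 / ((t - x) ^ 2 + y ^ 2) * (1 + (B / A) ^ 2)) := by
        field_simp
    _ ≤ K * (3 * (1 + c ^ 2)) :=
        mul_le_mul (hK _ hr) (sq_div_add_sq_mul_one_add_div_sq_le (by linarith) hy hB2)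
          (by positivity) hK0

/-- Let `c > 0`, `0 < s < 1`, `p ∈ ℝ`. The function
`g_s(x,y,t) = (log^{2p}(1+⟨t⟩)/log^{2p}(1+⟨x⟩)) (⟨t⟩^{2s}/⟨x⟩^{2s}) y²/((t-x)² + y²)`
is uniformly bounded on `{(x,y,t) : |y| ≤ c⟨x⟩} \ {y = 0, x = t}`, where `⟨x⟩ = √(1+x²)`. -/
theorem stmt14 (c : ℝ) (hc : 0 < c) (s p : ℝ) (hs0 : 0 < s) (hs1 : s < 1) :
    ∃ C : ℝ, ∀ x y t : ℝ, |y| ≤ c * Real.sqrt (1 + x ^ 2) → ¬(y = 0 ∧ x = t) →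
      (Real.log (1 + Real.sqrt (1 + t ^ 2)) ^ (2 * p)
          / Real.log (1 + Real.sqrt (1 + x ^ 2)) ^ (2 * p))
        * (Real.sqrt (1 + t ^ 2) ^ (2 * s) / Real.sqrt (1 + x ^ 2) ^ (2 * s))
        * (y ^ 2 / ((t - x) ^ 2 + y ^ 2)) ≤ C :=
  stmt14_general c s p hs0 hs1
end
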